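/- Let n > 1 and m < 1 be real numbers, c ∈ ℝ, and L > 0. Let Q : ℝ → ℝ be continuous with Q(y) ≥ 0 for all y and Q(y) = 0 for |y| ≥ L, and let W : ℝ → ℝ be continuous with W(y) = 0 for |y| ≥ L. Suppose that for all y ∈ ℝ, −c Q(y) + Q(y)ⁿ + (c/(1 − m)) W(y) = 0 (real powers, with 0ⁿ = 0). Then for every smooth compactly supported ψ : ℝ × ℝ → ℝ, ∫_{ℝ} ∫_{ℝ} [ −∂_t ψ(x, t) · Q(x − c t) − ∂_x ψ(x, t) · Q(x − c t)ⁿ − (c/(1 − m)) ∂_x ψ(x, t) · W(x − c t) ] dx dt = 0. -/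

import Mathlib

open MeasureTheory

/-- if a nonnegative compactly supported continuous profile `Q` (with
continuous compactly supported `W`) satisfies the compacton profile equation
`-c Q + Qⁿ + (c/(1-m)) W = 0` pointwise (real powers, `0ⁿ = 0`), then the traveling
wave `Q(x - ct)` satisfies the weak form of the magma equation against every smooth
compactly supported test function. -/
theorem stmt_19 (n m : ℝ) (hn : 1 < n) (hm : m < 1) (c : ℝ) (L : ℝ) (hL : 0 < L)
    (Q : ℝ → ℝ) (hQcont : Continuous Q) (hQnonneg : ∀ y, 0 ≤ Q y)
    (hQsupp : ∀ y : ℝ, L ≤ |y| → Q y = 0)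
    (W : ℝ → ℝ) (hWcont : Continuous W) (hWsupp : ∀ y : ℝ, L ≤ |y| → W y = 0)
    (hode : ∀ y : ℝ, -c * Q y + Q y ^ n + (c / (1 - m)) * W y = 0) :
    ∀ ψ : ℝ × ℝ → ℝ, ContDiff ℝ (⊤ : ℕ∞) ψ → HasCompactSupport ψ →
      ∫ t : ℝ, ∫ x : ℝ,
        (-(deriv (fun s => ψ (x, s)) t) * Q (x - c * t)
          - deriv (fun y => ψ (y, t)) x * Q (x - c * t) ^ n
          - (c / (1 - m)) * deriv (fun y => ψ (y, t)) x * W (x - c * t))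
        = 0 := by
  intro ψ hψ hψsupp
  have hode' : ∀ y, Q y ^ n + (c / (1 - m)) * W y = c * Q y := by
    intro y; have := hode y; linarith
  set D : ℝ × ℝ → ℝ := fun p => fderiv ℝ ψ p (c, 1) with hDdef
  have hψdiff : Differentiable ℝ ψ := hψ.differentiable (by simp)
  have hDcont : Continuous D :=
    (hψ.continuous_fderiv (by simp)).clm_apply continuous_const
  have hDsupp : HasCompactSupport D :=
    (hψsupp.fderiv ℝ).comp_left (g := fun (l : (ℝ × ℝ) →L[ℝ] ℝ) => l (c, 1)) rfl
  -- partial derivatives via fderiv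
  have hA : ∀ x t : ℝ, deriv (fun s => ψ (x, s)) t = fderiv ℝ ψ (x, t) (0, 1) := by
    intro x t
    have h1 : HasDerivAt (fun s : ℝ => ((x, s) : ℝ × ℝ)) ((0 : ℝ), (1 : ℝ)) t :=
      (hasDerivAt_const t x).prodMk (hasDerivAt_id t)
    exact ((hψdiff (x, t)).hasFDerivAt.comp_hasDerivAt t h1).deriv
  have hB : ∀ x t : ℝ, deriv (fun y => ψ (y, t)) x = fderiv ℝ ψ (x, t) (1, 0) := by
    intro x t
    have h1 : HasDerivAt (fun y : ℝ => ((y, t) : ℝ × ℝ)) ((1 : ℝ), (0 : ℝ)) x :=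
      (hasDerivAt_id x).prodMk (hasDerivAt_const x t)
    exact ((hψdiff (x, t)).hasFDerivAt.comp_hasDerivAt x h1).deriv
  have hlin : ∀ p : ℝ × ℝ, D p = c * fderiv ℝ ψ p (1, 0) + fderiv ℝ ψ p (0, 1) := by
    intro p
    have hv : ((c, 1) : ℝ × ℝ) = c • ((1 : ℝ), (0 : ℝ)) + ((0 : ℝ), (1 : ℝ)) := by
      simp [Prod.ext_iff]
    rw [hDdef]
    simp only [hv, map_add, ContinuousLinearMap.map_smul, smul_eq_mul]
  have hpt : ∀ x t : ℝ,
      (-(deriv (fun s => ψ (x, s)) t) * Q (x - c * t)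
        - deriv (fun y => ψ (y, t)) x * Q (x - c * t) ^ n
        - (c / (1 - m)) * deriv (fun y => ψ (y, t)) x * W (x - c * t))
      = -D (x, t) * Q (x - c * t) := by
    intro x t
    rw [hA, hB, hlin (x, t)]
    have h2 := hode' (x - c * t)
    linear_combination (-(fderiv ℝ ψ (x, t) (1, 0))) * h2
  simp only [hpt]
  -- shift the inner integral
  have hshift : ∀ t : ℝ, (∫ x : ℝ, -D (x, t) * Q (x - c * t))
      = ∫ y : ℝ, -D (y + c * t, t) * Q y := by
    intro t
    rw [← integral_add_right_eq_self (fun x => -D (x, t) * Q (x - c * t)) (c * t)]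
    simp
  simp only [hshift]
  -- Fubini swap
  obtain ⟨R, hR⟩ := hDsupp.isBounded.subset_closedBall 0
  have hcont : Continuous (Function.uncurry fun (t y : ℝ) => -D (y + c * t, t) * Q y) := by
    apply Continuous.mul
    · exact (hDcont.comp (by fun_prop)).neg
    · exact hQcont.comp continuous_snd
  have hsupp2 : HasCompactSupport (Function.uncurry fun (t y : ℝ) => -D (y + c * t, t) * Q y) := by
    apply HasCompactSupport.intro (K := Set.Icc (-R) R ×ˢ Set.Icc (-L) L)
      ((isCompact_Icc).prod isCompact_Icc)
    rintro ⟨t, y⟩ hp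
    simp only [Set.mem_prod, Set.mem_Icc, not_and_or, not_le] at hp
    have : t ∉ Set.Icc (-R) R ∨ y ∉ Set.Icc (-L) L := by
      rcases hp with h | h
      · left; simp only [Set.mem_Icc, not_and_or, not_le]; exact h
      · right; simp only [Set.mem_Icc, not_and_or, not_le]; exact h
    rcases this with h | h
    · have ht : R < |t| := by
        simp only [Set.mem_Icc, not_and_or, not_le] at h
        rcases h with h | h
        · exact lt_of_lt_of_le (by linarith) (neg_le_abs t)
        · exact lt_of_lt_of_le h (le_abs_self t)
      have hnot : ((y + c * t, t) : ℝ × ℝ) ∉ tsupport D := by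
        intro hmem
        have := hR hmem
        rw [Metric.mem_closedBall, dist_zero_right, Prod.norm_def] at this
        have : |t| ≤ R := le_trans (le_max_right _ _) this
        linarith
      have : D (y + c * t, t) = 0 := image_eq_zero_of_notMem_tsupport hnot
      simp [Function.uncurry, this]
    · have hy : L ≤ |y| := by
        simp only [Set.mem_Icc, not_and_or, not_le] at h
        rcases h with h | h
        · rw [abs_of_neg (by linarith : y < 0)]; linarith
        · rw [abs_of_pos (by linarith : 0 < y)]; linarith
      simp [Function.uncurry, hQsupp y hy]
  rw [integral_integral_swap_of_hasCompactSupport hcont hsupp2]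
  -- inner integral in t vanishes
  obtain ⟨Rψ, hRψ⟩ := hψsupp.isBounded.subset_closedBall 0
  have hinner : ∀ y : ℝ, (∫ t : ℝ, -D (y + c * t, t) * Q y) = 0 := by
    intro y
    rw [integral_mul_const]
    suffices h0 : (∫ t : ℝ, -D (y + c * t, t)) = 0 by rw [h0, zero_mul]
    set h : ℝ → ℝ := fun t => ψ (y + c * t, t) with hhdef
    have hcurve : ∀ t : ℝ, HasDerivAt (fun s : ℝ => ((y + c * s, s) : ℝ × ℝ))
        ((c : ℝ), (1 : ℝ)) t := fun t => by
      simpa using ((((hasDerivAt_id t).const_mul c).const_add y).prodMk (hasDerivAt_id t))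
    have hderiv : ∀ t : ℝ, HasDerivAt h (D (y + c * t, t)) t := by
      intro t
      exact HasFDerivAt.comp_hasDerivAt (l := ψ)
        (f := fun s : ℝ => ((y + c * s, s) : ℝ × ℝ)) t
        (hψdiff (y + c * t, t)).hasFDerivAt (hcurve t)
    have hderiv' : ∀ t : ℝ, deriv h t = D (y + c * t, t) := fun t => (hderiv t).deriv
    have hhC1 : ContDiff ℝ 1 h := by
      apply (hψ.of_le (by simp)).comp
      fun_prop
    have hhsupp : HasCompactSupport h := by
      apply HasCompactSupport.intro (K := Set.Icc (-Rψ) Rψ) isCompact_Icc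
      intro t ht
      have htR : Rψ < |t| := by
        simp only [Set.mem_Icc, not_and_or, not_le] at ht
        rcases ht with h' | h'
        · exact lt_of_lt_of_le (by linarith) (neg_le_abs t)
        · exact lt_of_lt_of_le h' (le_abs_self t)
      have hnot : ((y + c * t, t) : ℝ × ℝ) ∉ tsupport ψ := by
        intro hmem
        have := hRψ hmem
        rw [Metric.mem_closedBall, dist_zero_right, Prod.norm_def] at this
        have : |t| ≤ Rψ := le_trans (le_max_right _ _) this
        linarith
      exact image_eq_zero_of_notMem_tsupport (f := ψ) hnot
    have hderc : Continuous (deriv h) := hhC1.continuous_deriv le_rfl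
    have hint : Integrable (deriv h) := hderc.integrable_of_hasCompactSupport hhsupp.deriv
    have key : (∫ t : ℝ, deriv h t) = 0 := by
      have h1 : (∫ t in Set.Iic (0:ℝ), deriv h t) = h 0 :=
        hhsupp.integral_Iic_deriv_eq hhC1 0
      have h2 : (∫ t in Set.Ioi (0:ℝ), deriv h t) = -h 0 :=
        hhsupp.integral_Ioi_deriv_eq hhC1 0
      rw [← intervalIntegral.integral_Iic_add_Ioi hint.integrableOn hint.integrableOn, h1, h2]
      ring
    calc (∫ t : ℝ, -D (y + c * t, t)) = ∫ t : ℝ, -(deriv h t) := by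
          congr 1; funext t; rw [hderiv']
      _ = -(∫ t : ℝ, deriv h t) := integral_neg _
      _ = 0 := by rw [key, neg_zero]
  simp only [hinner, integral_zero]
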